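/- Time-splitting bootstrap lemma: Let A, B, C ≥ 0 and let F : ℝ → [0,∞) with F(0) = 0 be continuous and nondecreasing on intervals, satisfying the nonlinear estimate F(t₁,t₂) ≤ A + G(t₁,t₂)³ · F(t₁,t₂)² for every subinterval (t₁,t₂), where G(0,∞)⁶ = B < ∞ and G is the restriction of an L⁶-type norm so that G(t₁,t₂)⁶ is additive over disjoint intervals. Then F(0,∞)⁴ ≲ (1 + B·A²)·A⁴ · (constant), i.e., F is globally bounded by a quantity polynomial in A and B. -/
import Mathlib


open Set

private lemma g_cube_le {A g : ℝ} (hA : 0 < A) (hg : 0 ≤ g)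
    (h : g ^ 6 ≤ 1 / (64 * A ^ 2)) : g ^ 3 ≤ 1 / (8 * A) := by
  have h8 : 0 < 8 * A := by linarith
  have hc : 0 < 1 / (8 * A) := by positivity
  have h3 : 0 ≤ g ^ 3 := pow_nonneg hg 3
  have hsq : (g ^ 3) ^ 2 ≤ (1 / (8 * A)) ^ 2 := by
    have : (1 / (8 * A)) ^ 2 = 1 / (64 * A ^ 2) := by
      field_simp; ring
    rw [this]
    calc (g ^ 3) ^ 2 = g ^ 6 := by ring
    _ ≤ _ := h
  nlinarith

private lemma bootstrapL1 (A : ℝ) (hA : 0 < A) (F G : ℝ → ℝ → ℝ)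
    (hF0 : ∀ t₁ t₂, 0 ≤ F t₁ t₂) (hG0 : ∀ t₁ t₂, 0 ≤ G t₁ t₂)
    (hFdiag : ∀ t, F t t = 0)
    (hFcont : ∀ t₁, Continuous (F t₁))
    (hest : ∀ t₁ t₂, t₁ ≤ t₂ → F t₁ t₂ ≤ A + (G t₁ t₂) ^ 3 * (F t₁ t₂) ^ 2)
    (a b : ℝ) (hab : a ≤ b)
    (hGs : ∀ t, a ≤ t → t < b → (G a t) ^ 3 ≤ 1 / (8 * A)) :
    F a b ≤ 2 * A := by
  set S : Set ℝ := Icc a b ∩ {t | F a t ≤ 2 * A} with hSdef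
  have haS : a ∈ S := ⟨⟨le_refl a, hab⟩, by
    simp only [mem_setOf_eq, hFdiag a]; positivity⟩
  have hSne : S.Nonempty := ⟨a, haS⟩
  have hSbdd : BddAbove S := ⟨b, fun t ht => ht.1.2⟩
  have hScl : IsClosed S := isClosed_Icc.inter (isClosed_le (hFcont a) continuous_const)
  have hcS : sSup S ∈ S := hScl.csSup_mem hSne hSbdd
  set c := sSup S with hc
  rcases eq_or_lt_of_le hcS.1.2 with hcb | hcb
  · rw [← hcb]; exact hcS.2
  · exfalso
    have hG3 := hGs c hcS.1.1 hcb
    have hestc := hest a c hcS.1.1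
    have hG3nn : 0 ≤ (G a c) ^ 3 := pow_nonneg (hG0 a c) 3
    have hFc2A : F a c ≤ 2 * A := hcS.2
    have hF2 : (F a c) ^ 2 ≤ 4 * A ^ 2 := by nlinarith [hF0 a c]
    have hprod : (G a c) ^ 3 * (F a c) ^ 2 ≤ (1 / (8 * A)) * (4 * A ^ 2) :=
      mul_le_mul hG3 hF2 (sq_nonneg _) (by positivity)
    have hhalf : (1 / (8 * A)) * (4 * A ^ 2) = A / 2 := by field_simp; ring
    have hflt : F a c < 2 * A := by rw [hhalf] at hprod; linarith
    have hopen : IsOpen {t | F a t < 2 * A} := isOpen_lt (hFcont a) continuous_const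
    obtain ⟨ε, hε, hball⟩ := Metric.isOpen_iff.mp hopen c hflt
    set u := min (c + ε / 2) b with hu
    have hcu : c < u := lt_min (by linarith) hcb
    have huball : u ∈ Metric.ball c ε := by
      rw [Metric.mem_ball, Real.dist_eq, abs_lt]
      have h1 := min_le_left (c + ε / 2) b
      constructor <;> [linarith; linarith]
    have hFu : F a u < 2 * A := hball huball
    have huS : u ∈ S := ⟨⟨le_trans hcS.1.1 hcu.le, min_le_right _ _⟩, hFu.le⟩
    have : u ≤ c := le_csSup hSbdd huS
    linarith

private lemma bootstrapL2 (A : ℝ) (hA : 0 < A) (F G : ℝ → ℝ → ℝ)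
    (hF0 : ∀ t₁ t₂, 0 ≤ F t₁ t₂) (hG0 : ∀ t₁ t₂, 0 ≤ G t₁ t₂)
    (hFdiag : ∀ t, F t t = 0)
    (hFcont : ∀ t₁, Continuous (F t₁))
    (hest : ∀ t₁ t₂, t₁ ≤ t₂ → F t₁ t₂ ≤ A + (G t₁ t₂) ^ 3 * (F t₁ t₂) ^ 2)
    (hFadd : ∀ t₁ t₂ t₃, t₁ ≤ t₂ → t₂ ≤ t₃ →
      (F t₁ t₃) ^ 4 = (F t₁ t₂) ^ 4 + (F t₂ t₃) ^ 4)
    (hGadd : ∀ t₁ t₂ t₃, t₁ ≤ t₂ → t₂ ≤ t₃ →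
      (G t₁ t₃) ^ 6 = (G t₁ t₂) ^ 6 + (G t₂ t₃) ^ 6) :
    ∀ n : ℕ, ∀ a b : ℝ, a ≤ b → (G a b) ^ 6 ≤ ((n : ℝ) + 1) / (64 * A ^ 2) →
      (F a b) ^ 4 ≤ ((n : ℝ) + 1) * (2 * A) ^ 4 := by
  have hGdiag : ∀ t, (G t t) ^ 6 = 0 := fun t => by
    have := hGadd t t t le_rfl le_rfl; linarith
  have hGmono : ∀ a t b, a ≤ t → t ≤ b → (G a t) ^ 6 ≤ (G a b) ^ 6 := by
    intro a t b h1 h2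
    have h := hGadd a t b h1 h2
    have h6 : 0 ≤ (G t b) ^ 6 := pow_nonneg (hG0 t b) 6
    linarith
  intro n
  induction n with
  | zero =>
    intro a b hab hG
    have hFb : F a b ≤ 2 * A := by
      apply bootstrapL1 A hA F G hF0 hG0 hFdiag hFcont hest a b hab
      intro t hat htb
      apply g_cube_le hA (hG0 a t)
      calc (G a t) ^ 6 ≤ (G a b) ^ 6 := hGmono a t b hat htb.le
      _ ≤ ((0 : ℕ) + 1 : ℝ) / (64 * A ^ 2) := hG
      _ = 1 / (64 * A ^ 2) := by norm_num
    calc (F a b) ^ 4 ≤ (2 * A) ^ 4 := pow_le_pow_left₀ (hF0 a b) hFb 4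
    _ ≤ ((0 : ℕ) + 1 : ℝ) * (2 * A) ^ 4 := by norm_num
  | succ n ih =>
    intro a b hab hG
    push_cast at hG ⊢
    set δ : ℝ := 1 / (64 * A ^ 2) with hδ
    have hδpos : 0 < δ := by positivity
    set S : Set ℝ := Icc a b ∩ {t | (G a t) ^ 6 ≤ δ} with hSdef
    have haS : a ∈ S := ⟨⟨le_rfl, hab⟩, by
      simp only [mem_setOf_eq, hGdiag a]; exact hδpos.le⟩
    have hSne : S.Nonempty := ⟨a, haS⟩
    have hSbdd : BddAbove S := ⟨b, fun t ht => ht.1.2⟩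
    set c := sSup S with hc
    have hac : a ≤ c := le_csSup hSbdd haS
    have hcb : c ≤ b := csSup_le hSne fun t ht => ht.1.2
    have hFac : F a c ≤ 2 * A := by
      apply bootstrapL1 A hA F G hF0 hG0 hFdiag hFcont hest a c hac
      intro t hat htc
      obtain ⟨t', ht'S, htt'⟩ := exists_lt_of_lt_csSup hSne htc
      have ht'2 : (G a t') ^ 6 ≤ δ := ht'S.2
      exact g_cube_le hA (hG0 a t) ((hGmono a t t' hat htt'.le).trans ht'2)
    have hFac4 : (F a c) ^ 4 ≤ (2 * A) ^ 4 := pow_le_pow_left₀ (hF0 a c) hFac 4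
    have h16 : (0 : ℝ) ≤ (2 * A) ^ 4 := by positivity
    rcases eq_or_lt_of_le hcb with hceq | hclt
    · have hn0 : (0 : ℝ) ≤ (n : ℝ) := n.cast_nonneg
      calc (F a b) ^ 4 = (F a c) ^ 4 := by rw [hceq]
      _ ≤ (2 * A) ^ 4 := hFac4
      _ ≤ ((n : ℝ) + 1 + 1) * (2 * A) ^ 4 := by nlinarith
    · have key : ∀ s, c < s → s ≤ b → (F s b) ^ 4 ≤ ((n : ℝ) + 1) * (2 * A) ^ 4 := by
        intro s hcs hsb
        have has : a ≤ s := hac.trans hcs.le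
        have hsnotS : s ∉ S := fun hs => absurd (le_csSup hSbdd hs) (not_le.mpr hcs)
        have hGas : δ < (G a s) ^ 6 := by
          by_contra h
          exact hsnotS ⟨⟨has, hsb⟩, not_lt.mp h⟩
        have hsplit := hGadd a s b has hsb
        apply ih s b hsb
        rw [hδ] at hGas
        have hGab : (G a b) ^ 6 ≤ ((n : ℝ) + 1 + 1) * (1 / (64 * A ^ 2)) := by
          rw [mul_one_div]; exact hG
        have : ((n : ℝ) + 1) / (64 * A ^ 2) = ((n : ℝ) + 1) * (1 / (64 * A ^ 2)) := by
          rw [mul_one_div]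
        rw [this]
        linarith
      have hFcb : (F c b) ^ 4 ≤ ((n : ℝ) + 1) * (2 * A) ^ 4 := by
        apply le_of_forall_pos_le_add
        intro ε hε
        have hcont : Continuous fun t => (F c t) ^ 4 := (hFcont c).pow 4
        have hopen : IsOpen {t | (F c t) ^ 4 < ε} := isOpen_lt hcont continuous_const
        have hcmem : c ∈ {t | (F c t) ^ 4 < ε} := by
          simp only [mem_setOf_eq, hFdiag c]
          simpa using hε
        obtain ⟨r, hr, hball⟩ := Metric.isOpen_iff.mp hopen c hcmem
        set s := min (c + r / 2) b with hs
        have hcs : c < s := lt_min (by linarith) hclt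
        have hsb : s ≤ b := min_le_right _ _
        have hsball : s ∈ Metric.ball c r := by
          rw [Metric.mem_ball, Real.dist_eq, abs_lt]
          have h1 := min_le_left (c + r / 2) b
          constructor <;> [linarith; linarith]
        have hFcs : (F c s) ^ 4 < ε := hball hsball
        have hsplitF := hFadd c s b hcs.le hsb
        have hkey := key s hcs hsb
        linarith
      have hsplitF := hFadd a c b hac hcb
      linarith

private lemma mainPos (A B : ℝ) (hA : 0 < A) (hB : 0 ≤ B) (F G : ℝ → ℝ → ℝ)
    (hF0 : ∀ t₁ t₂, 0 ≤ F t₁ t₂) (hG0 : ∀ t₁ t₂, 0 ≤ G t₁ t₂)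
    (hFdiag : ∀ t, F t t = 0)
    (hFcont : ∀ t₁, Continuous (F t₁))
    (hest : ∀ t₁ t₂, t₁ ≤ t₂ → F t₁ t₂ ≤ A + (G t₁ t₂) ^ 3 * (F t₁ t₂) ^ 2)
    (hFadd : ∀ t₁ t₂ t₃, t₁ ≤ t₂ → t₂ ≤ t₃ →
      (F t₁ t₃) ^ 4 = (F t₁ t₂) ^ 4 + (F t₂ t₃) ^ 4)
    (hGadd : ∀ t₁ t₂ t₃, t₁ ≤ t₂ → t₂ ≤ t₃ →
      (G t₁ t₃) ^ 6 = (G t₁ t₂) ^ 6 + (G t₂ t₃) ^ 6)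
    (hGB : ∀ t₁ t₂, t₁ ≤ t₂ → (G t₁ t₂) ^ 6 ≤ B) :
    ∀ T : ℝ, 0 ≤ T → (F 0 T) ^ 4 ≤ 1024 * (1 + B * A ^ 2) * A ^ 4 := by
  intro T hT
  set n := ⌈64 * B * A ^ 2⌉₊ with hn
  have hBA : (0 : ℝ) ≤ 64 * B * A ^ 2 := by positivity
  have h2 : 64 * B * A ^ 2 ≤ (n : ℝ) := Nat.le_ceil _
  have h1 : (G 0 T) ^ 6 ≤ ((n : ℝ) + 1) / (64 * A ^ 2) := by
    have hA2 : (0 : ℝ) < 64 * A ^ 2 := by positivity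
    rw [le_div_iff₀ hA2]
    have h3 : (G 0 T) ^ 6 * (64 * A ^ 2) ≤ B * (64 * A ^ 2) :=
      mul_le_mul_of_nonneg_right (hGB 0 T hT) hA2.le
    nlinarith
  have h4 := bootstrapL2 A hA F G hF0 hG0 hFdiag hFcont hest hFadd hGadd n 0 T hT h1
  have h5 : (n : ℝ) ≤ 64 * B * A ^ 2 + 1 := (Nat.ceil_lt_add_one hBA).le
  have h6 : ((n : ℝ) + 1) * (2 * A) ^ 4 ≤ (64 * B * A ^ 2 + 2) * (2 * A) ^ 4 :=
    mul_le_mul_of_nonneg_right (by linarith) (by positivity)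
  nlinarith [pow_nonneg hA.le 4, mul_nonneg hB (pow_nonneg hA.le 6)]

/-- Time-splitting bootstrap lemma: suppose `F(t₁,t₂) ≥ 0` vanishes on degenerate
intervals, is continuous and nondecreasing in the right endpoint, satisfies
`F(t₁,t₂) ≤ A + G(t₁,t₂)³ F(t₁,t₂)²` on every subinterval, `F⁴` and `G⁶` are
additive over adjacent intervals, and `G⁶ ≤ B` globally. Then `F` is globally
bounded, polynomially in `A` and `B`: `F(0,T)⁴ ≤ C(1 + B·A²)·A⁴` for all `T`. -/
theorem stmt17 :
    ∃ C : ℝ, 0 < C ∧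
      ∀ (A B : ℝ) (hA : 0 ≤ A) (hB : 0 ≤ B) (F G : ℝ → ℝ → ℝ)
        (hF0 : ∀ t₁ t₂, 0 ≤ F t₁ t₂) (hG0 : ∀ t₁ t₂, 0 ≤ G t₁ t₂)
        (hFdiag : ∀ t, F t t = 0)
        (hFcont : ∀ t₁, Continuous (F t₁))
        (hFmono : ∀ t₁, MonotoneOn (F t₁) (Set.Ici t₁))
        (hest : ∀ t₁ t₂, t₁ ≤ t₂ → F t₁ t₂ ≤ A + (G t₁ t₂) ^ 3 * (F t₁ t₂) ^ 2)
        (hFadd : ∀ t₁ t₂ t₃, t₁ ≤ t₂ → t₂ ≤ t₃ →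
          (F t₁ t₃) ^ 4 = (F t₁ t₂) ^ 4 + (F t₂ t₃) ^ 4)
        (hGadd : ∀ t₁ t₂ t₃, t₁ ≤ t₂ → t₂ ≤ t₃ →
          (G t₁ t₃) ^ 6 = (G t₁ t₂) ^ 6 + (G t₂ t₃) ^ 6)
        (hGB : ∀ t₁ t₂, t₁ ≤ t₂ → (G t₁ t₂) ^ 6 ≤ B),
        ∀ T : ℝ, 0 ≤ T → (F 0 T) ^ 4 ≤ C * (1 + B * A ^ 2) * A ^ 4 := by
  refine ⟨1024, by norm_num, ?_⟩
  intro A B hA hB F G hF0 hG0 hFdiag hFcont hFmono hest hFadd hGadd hGB T hT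
  rcases hA.eq_or_lt with hA0 | hApos
  · -- A = 0
    have hle : ∀ ε : ℝ, 0 < ε → (F 0 T) ^ 4 ≤ 1024 * (1 + B * ε ^ 2) * ε ^ 4 := by
      intro ε hε
      refine mainPos ε B hε hB F G hF0 hG0 hFdiag hFcont ?_ hFadd hGadd hGB T hT
      intro t₁ t₂ h
      have h0 := hest t₁ t₂ h
      rw [← hA0] at h0
      linarith
    have h0 : (F 0 T) ^ 4 ≤ 0 := by
      apply le_of_forall_pos_le_add
      intro ε' hε'
      have hB1 : (0 : ℝ) < 1024 * (1 + B) := by linarith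
      set ε := min 1 (ε' / (1024 * (1 + B))) with hεdef
      have hεpos : 0 < ε := lt_min one_pos (div_pos hε' hB1)
      have h := hle ε hεpos
      have hε1 : ε ≤ 1 := min_le_left _ _
      have hε2 : ε ≤ ε' / (1024 * (1 + B)) := min_le_right _ _
      have e2 : ε ^ 2 ≤ 1 := by nlinarith
      have e4 : ε ^ 4 ≤ ε := by nlinarith
      have s1 : 1024 * (1 + B * ε ^ 2) * ε ^ 4 ≤ 1024 * (1 + B) * ε ^ 4 := by
        have h' : B * ε ^ 4 * ε ^ 2 ≤ B * ε ^ 4 * 1 :=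
          mul_le_mul_of_nonneg_left e2 (mul_nonneg hB (pow_nonneg hεpos.le 4))
        nlinarith [h']
      have s2 : 1024 * (1 + B) * ε ^ 4 ≤ 1024 * (1 + B) * ε :=
        mul_le_mul_of_nonneg_left e4 hB1.le
      have s3 : 1024 * (1 + B) * ε ≤ ε' := by
        have := (le_div_iff₀ hB1).mp hε2
        linarith
      linarith
    rw [← hA0]
    simpa using h0
  · exact mainPos A B hApos hB F G hF0 hG0 hFdiag hFcont hest hFadd hGadd hGB T hT
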